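/- arXiv:math/9902032 — 2 statements merged into one kernel-verified Lean document; each statement's English description precedes it below -/
import Mathlib

section
/- If k,ℓ,s,t are natural numbers with k > ℓ, 2s ≤ k, 2t ≤ ℓ, and 0 ≤ s - t ≤ k - ℓ, then δ_{k,ℓ;s,t} > 0, where δ_{k,ℓ;s,t} = (1/(n(k-ℓ)))·((k-ℓ+t-s)(k+ℓ-2(s+t)+n-1) + (s-t)(k+ℓ+1) + 2(kt-ℓs)) and n ≥ 1. -/
/-!
With `d = k - ℓ` and `a = s - t`, the numerator of `δ_{k,ℓ;s,t}` equals
`(d - a)((k - 2s) + (ℓ - 2t) + (n - 1)) + a(d + 1) + 2dt`, a sum of non-negative terms.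
It is positive: if `a > 0` the middle term is, and if `a = 0` then `k - 2s = (ℓ - 2t) + d > 0`
makes the first one positive.
-/

noncomputable section

/-- The eigenvalue γ_{k,s} of the Casimir operator C_δ:
γ_{k,s} = 2s(n + 2(k-s-1)) + 2k(1 + n(δ-1) - k) - n²δ(δ-1). -/
def gammaKS (n k s : ℕ) (δ : ℝ) : ℝ :=
  2 * (s:ℝ) * ((n:ℝ) + 2 * ((k:ℝ) - (s:ℝ) - 1))
    + 2 * (k:ℝ) * (1 + (n:ℝ) * (δ - 1) - (k:ℝ))
    - (n:ℝ)^2 * δ * (δ - 1)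

/-- The resonance δ_{k,ℓ;s,t} = (1/(n(k-ℓ)))·((k-ℓ+t-s)(k+ℓ-2(s+t)+n-1)
+ (s-t)(k+ℓ+1) + 2(kt-ℓs)). -/
def deltaRes (n k l s t : ℕ) : ℝ :=
  (1 / ((n:ℝ) * ((k:ℝ) - (l:ℝ)))) *
    ( ((k:ℝ) - (l:ℝ) + (t:ℝ) - (s:ℝ)) * ((k:ℝ) + (l:ℝ) - 2 * ((s:ℝ) + (t:ℝ)) + (n:ℝ) - 1)
      + ((s:ℝ) - (t:ℝ)) * ((k:ℝ) + (l:ℝ) + 1)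
      + 2 * ((k:ℝ) * (t:ℝ) - (l:ℝ) * (s:ℝ)) )

theorem resonance_numerator_eq (n k l s t : ℝ) :
    (k - l + t - s) * (k + l - 2 * (s + t) + n - 1) + (s - t) * (k + l + 1)
        + 2 * (k * t - l * s) =
      (k - l - (s - t)) * ((k - 2 * s) + (l - 2 * t) + (n - 1)) + (s - t) * (k - l + 1)
        + 2 * (k - l) * t := by
  ring

theorem resonance_numerator_pos {n k l s t : ℝ} (hn : 1 ≤ n) (hkl : l < k)
    (hs : 2 * s ≤ k) (ht : 2 * t ≤ l) (ht₀ : 0 ≤ t) (hts : t ≤ s) (hstkl : s - t ≤ k - l) :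
    0 < (k - l + t - s) * (k + l - 2 * (s + t) + n - 1) + (s - t) * (k + l + 1)
        + 2 * (k * t - l * s) := by
  rw [resonance_numerator_eq]
  have hd : 0 < k - l := sub_pos.2 hkl
  have hX : 0 ≤ (k - 2 * s) + (l - 2 * t) + (n - 1) := by linarith
  have hlast : 0 ≤ 2 * (k - l) * t := by positivity
  rcases (sub_nonneg.2 hts).eq_or_lt with hst | hst
  · have hX_pos : 0 < (k - 2 * s) + (l - 2 * t) + (n - 1) := by linarith
    rw [← hst, sub_zero, zero_mul]
    linarith [mul_pos hd hX_pos]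
  · linarith [mul_nonneg (sub_nonneg.2 hstkl) hX, mul_pos hst (by linarith : 0 < k - l + 1)]

/-- if k > ℓ, 2s ≤ k, 2t ≤ ℓ and 0 ≤ s - t ≤ k - ℓ, then δ_{k,ℓ;s,t} > 0. -/
theorem stmt7 (n : ℕ) (hn : 1 ≤ n) (k l s t : ℕ) (hkl : l < k)
    (hs : 2 * s ≤ k) (ht : 2 * t ≤ l)
    (hts : t ≤ s) (hstkl : (s:ℝ) - (t:ℝ) ≤ (k:ℝ) - (l:ℝ)) :
    0 < deltaRes n k l s t := by
  have hkl' : (l : ℝ) < k := by exact_mod_cast hkl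
  have hden : 0 < (n : ℝ) * (k - l) :=
    mul_pos (by exact_mod_cast hn) (sub_pos.2 hkl')
  exact mul_pos (one_div_pos.2 hden)
    (resonance_numerator_pos (by exact_mod_cast hn) hkl' (by exact_mod_cast hs)
      (by exact_mod_cast ht) t.cast_nonneg (by exact_mod_cast hts) hstkl)
end
end

section
/- The product defined via a quantization map Q(P) = P + iħ(αD(P) + βG_0(P)) + O(ħ²) by Q(P★Q) = Q(P)∘Q(Q) (composition of differential operators via normal ordering) satisfies, to first order in ħ, P★Q = PQ + (iħ/2){P,Q} + iħ·d((α-1/2)D + βG_0)(P,Q), where d denotes the Hochschild coboundary dA(P,Q)=A(P)Q+PA(Q)-A(PQ). Consequently ★ is a star-product (first-order term equal to (1/2){·,·}) iff α = 1/2 and β = 0. -/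
noncomputable section
open MvPolynomial

/-- The polynomial algebra ℂ[x^1,…,x^n, ξ_1,…,ξ_n] on T*ℝ^n:
`Sum.inl i ↦ x^i`, `Sum.inr i ↦ ξ_i`. -/
abbrev PA (n : ℕ) := MvPolynomial (Fin n ⊕ Fin n) ℂ

/-- The variable x^i. -/
def xv (n : ℕ) (i : Fin n) : PA n := X (Sum.inl i)
/-- The variable ξ_i. -/
def ξv (n : ℕ) (i : Fin n) : PA n := X (Sum.inr i)
/-- ∂/∂x^i. -/
def ddx (n : ℕ) (i : Fin n) : Module.End ℂ (PA n) := (pderiv (Sum.inl i)).toLinearMap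
/-- ∂/∂ξ_i. -/
def ddξ (n : ℕ) (i : Fin n) : Module.End ℂ (PA n) := (pderiv (Sum.inr i)).toLinearMap
/-- Multiplication operator by a polynomial. -/
def mulOp (n : ℕ) (p : PA n) : Module.End ℂ (PA n) := LinearMap.mulLeft ℂ p

/- The flat (pseudo-Euclidean) metric is taken diagonal in adapted coordinates:
`g^{ii} = g_{ii} = ε i = ±1`; indices are raised/lowered by `ε`. -/

/-- R = g^{ij} ξ_i ξ_j = ξ^i ξ_i (multiplication operator). -/
def Rop (n : ℕ) (ε : Fin n → ℂ) : Module.End ℂ (PA n) :=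
  mulOp n (∑ i, C (ε i) * ξv n i * ξv n i)
/-- T = g^{ij} ∂_{ξ_i} ∂_{ξ_j} = ∂_{ξ^i}∂_{ξ_i} (trace operator). -/
def TrOp (n : ℕ) (ε : Fin n → ℂ) : Module.End ℂ (PA n) :=
  ∑ i, ε i • (ddξ n i * ddξ n i)
/-- The Euler operator E' = Σ ξ_i ∂_{ξ_i}. -/
def Eul (n : ℕ) : Module.End ℂ (PA n) := ∑ i, mulOp n (ξv n i) * ddξ n i
/-- E = Σ ξ_i ∂_{ξ_i} + n/2. -/
def Eop (n : ℕ) : Module.End ℂ (PA n) := Eul n + ((n : ℂ)/2) • 1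
/-- G = ξ^i ∂_{x^i} = g^{ij} ξ_i ∂_{x^j}. -/
def Gop (n : ℕ) (ε : Fin n → ℂ) : Module.End ℂ (PA n) :=
  ∑ i, ε i • (mulOp n (ξv n i) * ddx n i)
/-- D = Σ ∂_{ξ_i} ∂_{x^i} (divergence operator). -/
def Dop (n : ℕ) : Module.End ℂ (PA n) := ∑ i, ddξ n i * ddx n i
/-- Δ = ∂_{x^i}∂_{x_i} = g^{ij} ∂_{x^i} ∂_{x^j} (Laplacian). -/
def Lap (n : ℕ) (ε : Fin n → ℂ) : Module.End ℂ (PA n) :=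
  ∑ i, ε i • (ddx n i * ddx n i)
/-- R₀ = R T. -/
def R0 (n : ℕ) (ε : Fin n → ℂ) : Module.End ℂ (PA n) := Rop n ε * TrOp n ε
/-- G₀ = G T. -/
def G0 (n : ℕ) (ε : Fin n → ℂ) : Module.End ℂ (PA n) := Gop n ε * TrOp n ε
/-- The generator of inversions L^δ_{X̄_i} =
x_jx^j ∂_{x^i} - 2 x_i x^j ∂_{x^j} - 2(ξ_i x_j - ξ_j x_i) g^{jk} ∂_{ξ_k}
+ 2 ξ_j x^j g^{ik} ∂_{ξ_k} - 2nδ x_i. -/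
def Linv (n : ℕ) (ε : Fin n → ℂ) (δ : ℂ) (i : Fin n) : Module.End ℂ (PA n) :=
  mulOp n (∑ j, C (ε j) * xv n j * xv n j) * ddx n i
  - (2:ℂ) • (ε i • (mulOp n (xv n i) * ∑ j, mulOp n (xv n j) * ddx n j))
  - (2:ℂ) • (∑ j, ε j • (mulOp n (ξv n i * C (ε j) * xv n j - ξv n j * C (ε i) * xv n i) * ddξ n j))
  + (2:ℂ) • (ε i • (mulOp n (∑ j, ξv n j * xv n j) * ddξ n i))
  - (2 * (n:ℂ) * δ * ε i) • mulOp n (xv n i)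

/-- The canonical Poisson bracket {P,Q} = Σ_j (∂_{ξ_j}P ∂_{x^j}Q - ∂_{x^j}P ∂_{ξ_j}Q). -/
def pois (n : ℕ) (P Q : PA n) : PA n :=
  ∑ j, (ddξ n j P * ddx n j Q - ddx n j P * ddξ n j Q)

/-- The Hochschild coboundary of a 1-cochain A: (dA)(P,Q) = A(P)Q + P A(Q) - A(PQ). -/
def hoch (n : ℕ) (A : Module.End ℂ (PA n)) (P Q : PA n) : PA n :=
  A P * Q + P * A Q - A (P * Q)

/-- The first-order (in ħ) term of the product P★Q induced, via normal ordering,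
by the quantization map Q(P) = P + iħ(αD(P) + βG₀(P)) + O(ħ²):
namely Σ_j ∂_{ξ_j}P ∂_{x^j}Q + d(αD + βG₀)(P,Q). -/
def firstOrd (n : ℕ) (ε : Fin n → ℂ) (α β : ℂ) (P Q : PA n) : PA n :=
  (∑ j, ddξ n j P * ddx n j Q) + hoch n (α • Dop n + β • G0 n ε) P Q


section Aux

lemma ddx_apply' (n : ℕ) (i : Fin n) (P : PA n) : ddx n i P = pderiv (Sum.inl i) P := rfl
lemma ddξ_apply' (n : ℕ) (i : Fin n) (P : PA n) : ddξ n i P = pderiv (Sum.inr i) P := rfl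

lemma Dop_apply' (n : ℕ) (P : PA n) :
    Dop n P = ∑ i, pderiv (Sum.inr i) (pderiv (Sum.inl i) P) := by
  simp [Dop, LinearMap.sum_apply, Module.End.mul_apply, ddx_apply', ddξ_apply']

lemma TrOp_apply' (n : ℕ) (ε : Fin n → ℂ) (P : PA n) :
    TrOp n ε P = ∑ i, ε i • pderiv (Sum.inr i) (pderiv (Sum.inr i) P) := by
  simp [TrOp, LinearMap.sum_apply, Module.End.mul_apply, ddξ_apply']

lemma Gop_apply' (n : ℕ) (ε : Fin n → ℂ) (P : PA n) :
    Gop n ε P = ∑ i, ε i • (ξv n i * pderiv (Sum.inl i) P) := by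
  simp [Gop, LinearMap.sum_apply, Module.End.mul_apply, ddx_apply', mulOp,
    LinearMap.mulLeft_apply]

lemma G0_apply' (n : ℕ) (ε : Fin n → ℂ) (P : PA n) :
    G0 n ε P = Gop n ε (TrOp n ε P) := rfl

lemma Dop_mul' (n : ℕ) (P Q : PA n) :
    Dop n (P * Q) = Dop n P * Q + P * Dop n Q
      + ((∑ i, ddξ n i P * ddx n i Q) + ∑ i, ddx n i P * ddξ n i Q) := by
  simp only [Dop_apply', ddx_apply', ddξ_apply', pderiv_mul, map_add]
  rw [Finset.sum_add_distrib, Finset.sum_add_distrib, Finset.sum_add_distrib,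
    Finset.sum_mul, Finset.mul_sum]
  ring

lemma Dop_ξ (n : ℕ) (i : Fin n) : Dop n (ξv n i) = 0 := by
  simp [Dop_apply', ξv, pderiv_X, Pi.single_apply]

lemma Dop_x (n : ℕ) (i : Fin n) : Dop n (xv n i) = 0 := by
  simp [Dop_apply', xv, pderiv_X, Pi.single_apply, apply_ite]

lemma Dop_ξx (n : ℕ) (i : Fin n) : Dop n (ξv n i * xv n i) = 1 := by
  rw [Dop_apply', Finset.sum_eq_single i]
  · simp [ξv, xv, pderiv_mul, pderiv_X, Pi.single_apply]
  · intro b _ hb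
    simp [ξv, xv, pderiv_mul, pderiv_X, Pi.single_apply, hb, Ne.symm hb]
  · simp

lemma Dop_ξξ (n : ℕ) (i : Fin n) : Dop n (ξv n i * ξv n i) = 0 := by
  simp [Dop_apply', ξv, pderiv_mul, pderiv_X, Pi.single_apply, apply_ite]

lemma Dop_ξξx (n : ℕ) (i : Fin n) :
    Dop n (ξv n i * ξv n i * xv n i) = C 2 * ξv n i := by
  rw [Dop_apply', Finset.sum_eq_single i]
  · simp [ξv, xv, pderiv_mul, pderiv_X, Pi.single_apply, map_ofNat]
    ring
  · intro b _ hb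
    simp [ξv, xv, pderiv_mul, pderiv_X, Pi.single_apply, hb, Ne.symm hb]
  · simp

lemma TrOp_ξ (n : ℕ) (ε : Fin n → ℂ) (i : Fin n) : TrOp n ε (ξv n i) = 0 := by
  simp [TrOp_apply', ξv, pderiv_X, Pi.single_apply, apply_ite]

lemma TrOp_x (n : ℕ) (ε : Fin n → ℂ) (i : Fin n) : TrOp n ε (xv n i) = 0 := by
  simp [TrOp_apply', xv, pderiv_X, Pi.single_apply, apply_ite]

lemma TrOp_ξx (n : ℕ) (ε : Fin n → ℂ) (i : Fin n) : TrOp n ε (ξv n i * xv n i) = 0 := by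
  rw [TrOp_apply', Finset.sum_eq_single i]
  · simp [ξv, xv, pderiv_mul, pderiv_X, Pi.single_apply, apply_ite]
  · intro b _ hb
    simp [ξv, xv, pderiv_mul, pderiv_X, Pi.single_apply, hb, Ne.symm hb]
  · simp

lemma TrOp_ξξ (n : ℕ) (ε : Fin n → ℂ) (i : Fin n) :
    TrOp n ε (ξv n i * ξv n i) = C (2 * ε i) := by
  rw [TrOp_apply', Finset.sum_eq_single i]
  · simp [ξv, pderiv_mul, pderiv_X, Pi.single_apply, smul_eq_C_mul, map_mul, map_ofNat]
    ring
  · intro b _ hb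
    simp [ξv, pderiv_mul, pderiv_X, Pi.single_apply, hb, Ne.symm hb]
  · simp

lemma TrOp_ξξx (n : ℕ) (ε : Fin n → ℂ) (i : Fin n) :
    TrOp n ε (ξv n i * ξv n i * xv n i) = C (2 * ε i) * xv n i := by
  rw [TrOp_apply', Finset.sum_eq_single i]
  · simp [ξv, xv, pderiv_mul, pderiv_X, Pi.single_apply, smul_eq_C_mul, map_mul, map_ofNat]
    ring
  · intro b _ hb
    simp [ξv, xv, pderiv_mul, pderiv_X, Pi.single_apply, hb, Ne.symm hb]
  · simp

lemma Gop_C (n : ℕ) (ε : Fin n → ℂ) (c : ℂ) : Gop n ε (C c) = 0 := by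
  simp [Gop_apply']

lemma Gop_Cx (n : ℕ) (ε : Fin n → ℂ) (c : ℂ) (i : Fin n) :
    Gop n ε (C c * xv n i) = C (c * ε i) * ξv n i := by
  rw [Gop_apply', Finset.sum_eq_single i]
  · simp [ξv, xv, pderiv_mul, pderiv_X, Pi.single_apply, smul_eq_C_mul, map_mul, map_ofNat]
    ring
  · intro b _ hb
    simp [ξv, xv, pderiv_mul, pderiv_X, Pi.single_apply, hb, Ne.symm hb]
  · simp

lemma G0_ξ (n : ℕ) (ε : Fin n → ℂ) (i : Fin n) : G0 n ε (ξv n i) = 0 := by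
  rw [G0_apply', TrOp_ξ]; exact map_zero _

lemma G0_x (n : ℕ) (ε : Fin n → ℂ) (i : Fin n) : G0 n ε (xv n i) = 0 := by
  rw [G0_apply', TrOp_x]; exact map_zero _

lemma G0_ξx (n : ℕ) (ε : Fin n → ℂ) (i : Fin n) : G0 n ε (ξv n i * xv n i) = 0 := by
  rw [G0_apply', TrOp_ξx]; exact map_zero _

lemma G0_ξξ (n : ℕ) (ε : Fin n → ℂ) (i : Fin n) : G0 n ε (ξv n i * ξv n i) = 0 := by
  rw [G0_apply', TrOp_ξξ, Gop_C]

lemma G0_ξξx (n : ℕ) (ε : Fin n → ℂ) (hε : ∀ i, ε i = 1 ∨ ε i = -1) (i : Fin n) :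
    G0 n ε (ξv n i * ξv n i * xv n i) = C 2 * ξv n i := by
  rw [G0_apply', TrOp_ξξx, Gop_Cx]
  have : ε i * ε i = 1 := by rcases hε i with h | h <;> simp [h]
  congr 1
  rw [show 2 * ε i * ε i = 2 * (ε i * ε i) by ring, this, mul_one]

lemma sum_ξx (n : ℕ) (i : Fin n) :
    (∑ j, ddξ n j (ξv n i) * ddx n j (xv n i)) = 1 := by
  rw [Finset.sum_eq_single i]
  · simp [ddξ_apply', ddx_apply', ξv, xv, pderiv_X, Pi.single_apply]
  · intro b _ hb
    simp [ddξ_apply', ddx_apply', ξv, xv, pderiv_X, Pi.single_apply, hb, Ne.symm hb]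
  · simp

lemma sum_ξξx (n : ℕ) (i : Fin n) :
    (∑ j, ddξ n j (ξv n i * ξv n i) * ddx n j (xv n i)) = C 2 * ξv n i := by
  rw [Finset.sum_eq_single i]
  · simp [ddξ_apply', ddx_apply', ξv, xv, pderiv_mul, pderiv_X, Pi.single_apply, map_ofNat]
    ring
  · intro b _ hb
    simp [ddξ_apply', ddx_apply', ξv, xv, pderiv_mul, pderiv_X, Pi.single_apply, hb, Ne.symm hb]
  · simp

lemma pois_ξx (n : ℕ) (i : Fin n) : pois n (ξv n i) (xv n i) = 1 := by
  rw [pois, Finset.sum_eq_single i]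
  · simp [ddξ_apply', ddx_apply', ξv, xv, pderiv_X, Pi.single_apply]
  · intro b _ hb
    simp [ddξ_apply', ddx_apply', ξv, xv, pderiv_X, Pi.single_apply, hb, Ne.symm hb]
  · simp

lemma pois_ξξx (n : ℕ) (i : Fin n) :
    pois n (ξv n i * ξv n i) (xv n i) = C 2 * ξv n i := by
  rw [pois, Finset.sum_eq_single i]
  · simp [ddξ_apply', ddx_apply', ξv, xv, pderiv_mul, pderiv_X, Pi.single_apply, map_ofNat]
    ring
  · intro b _ hb
    simp [ddξ_apply', ddx_apply', ξv, xv, pderiv_mul, pderiv_X, Pi.single_apply, hb, Ne.symm hb]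
  · simp

lemma key1 (n : ℕ) (ε : Fin n → ℂ) (α β : ℂ) (P Q : PA n) :
    firstOrd n ε α β P Q
      = ((1:ℂ)/2) • pois n P Q + hoch n ((α - 1/2) • Dop n + β • G0 n ε) P Q := by
  simp only [firstOrd, hoch, pois, LinearMap.add_apply, LinearMap.smul_apply, Dop_mul',
    add_mul, mul_add, smul_mul_assoc, mul_smul_comm, Finset.sum_sub_distrib, smul_add, smul_sub]
  module

end Aux

/-- to first order in ħ, P★Q = PQ + (iħ/2){P,Q}
+ iħ·d((α-1/2)D + βG₀)(P,Q); consequently ★ is a star-product (first-order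
term equal to (1/2){·,·}) iff α = 1/2 and β = 0. -/
theorem stmt17 (n : ℕ) (hn : 2 ≤ n) (ε : Fin n → ℂ) (hε : ∀ i, ε i = 1 ∨ ε i = -1)
    (α β : ℂ) :
    (∀ P Q : PA n, firstOrd n ε α β P Q
        = ((1:ℂ)/2) • pois n P Q + hoch n ((α - 1/2) • Dop n + β • G0 n ε) P Q) ∧
    ((∀ P Q : PA n, firstOrd n ε α β P Q = ((1:ℂ)/2) • pois n P Q)
        ↔ (α = 1/2 ∧ β = 0)) := by
  refine ⟨key1 n ε α β, ?_, ?_⟩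
  · intro h
    have h0 : 0 < n := by omega
    set i0 : Fin n := ⟨0, h0⟩ with hi0
    have h1 := h (ξv n i0) (xv n i0)
    rw [firstOrd, hoch] at h1
    simp only [LinearMap.add_apply, LinearMap.smul_apply, Dop_ξ, Dop_x, Dop_ξx,
      G0_ξ, G0_x, G0_ξx, sum_ξx, pois_ξx, smul_zero, add_zero, zero_add, mul_zero,
      zero_mul, mul_one, smul_eq_C_mul] at h1
    have hα : α = 1/2 := by
      have := congrArg (coeff 0) h1
      simp [coeff_zero_C] at this
      linear_combination -this
    refine ⟨hα, ?_⟩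
    have h2 := h (ξv n i0 * ξv n i0) (xv n i0)
    rw [firstOrd, hoch] at h2
    simp only [LinearMap.add_apply, LinearMap.smul_apply, Dop_ξξ, Dop_x, Dop_ξξx,
      G0_ξξ, G0_x, G0_ξξx n ε hε, sum_ξξx, pois_ξξx, smul_zero, add_zero, zero_add,
      mul_zero, zero_mul, smul_eq_C_mul] at h2
    have h3 := congrArg (coeff (Finsupp.single (Sum.inr i0) 1)) h2
    simp [ξv, coeff_C_mul, coeff_X, hα] at h3
    linear_combination (-1/2 : ℂ) * h3
  · rintro ⟨rfl, rfl⟩ P Q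
    rw [key1]
    simp [hoch]
end
end
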